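/- If a conjunct ψ of HML_srbb distinguishes a process p from a process q (with respect to ⟦·⟧^∧), then expr^∧(ψ) ∈ Win_a([p,q]^∧_a) in the weak spectroscopy energy game G△. -/

import Mathlib

open Classical

noncomputable section

namespace Spectroscopy

/-! ### Energies and declining energy games -/

/-- Energies: 8-dimensional vectors over `ℕ ∪ {∞}`, ordered componentwise. -/
abbrev Energy : Type := Fin 8 → ℕ∞

/-- The `i`-th unit vector. -/
def unitE (i : Fin 8) : Energy := fun k => if k = i then 1 else 0

/-- The vector with value `v` at position `i` and `0` elsewhere. -/
def onlyAt (i : Fin 8) (v : ℕ∞) : Energy := fun k => if k = i then v else 0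

/-- Components of energy updates: `-1`, `0`, or minimum selection `min_D`.
For the component at position `k`, `minWith D` selects the minimum over the
positions `{k} ∪ D`, so the requirement `k ∈ D` of the paper holds by
construction. -/
inductive UpdComp : Type
  | decr : UpdComp
  | zero : UpdComp
  | minWith (D : Finset (Fin 8)) : UpdComp
deriving DecidableEq

/-- Energy updates. -/
abbrev Update : Type := Fin 8 → UpdComp

/-- Partial application of an update to an energy (`none` when a component
would become negative). -/
def upd (e : Energy) (u : Update) : Option Energy :=
  if ∀ k, u k = UpdComp.decr → e k ≠ 0 then
    some (fun k =>
      match u k with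
      | UpdComp.decr => e k - 1
      | UpdComp.zero => e k
      | UpdComp.minWith D => (insert k D).inf e)
  else none

/-- A declining energy game: positions, a defender predicate (attacker
positions are the non-defender ones), and moves labeled with updates. -/
structure EGame (Pos : Type) where
  defender : Pos → Prop
  move : Pos → Update → Pos → Prop

/-- Attacker winning budgets `Win_a`: at an attacker position some move must
lead to an attacker-won position under the updated energy; at a defender
position every move must (be defined and) lead to an attacker-won position. -/
inductive EGame.Win {Pos : Type} (G : EGame Pos) : Pos → Energy → Prop
  | attack {g : Pos} {u : Update} {g' : Pos} {e e' : Energy} :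
      ¬ G.defender g → G.move g u g' → upd e u = some e' → G.Win g' e' →
      G.Win g e
  | defend {g : Pos} {e : Energy} :
      G.defender g →
      (∀ u g', G.move g u g' → upd e u ≠ none) →
      (∀ u g' e', G.move g u g' → upd e u = some e' → G.Win g' e') →
      G.Win g e

/-! ### Labeled transition systems with silent steps -/

section LTS

variable {Proc Act : Type}

/-- Weak internal steps `↠`: reflexive-transitive closure of `τ`-steps. -/
def Star (Tr : Proc → Act → Proc → Prop) (τ : Act) : Proc → Proc → Prop :=
  Relation.ReflTransGen fun p p' => Tr p τ p'

/-- A process is stable if it has no `τ`-step. -/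
def Stable (Tr : Proc → Act → Proc → Prop) (τ : Act) (p : Proc) : Prop :=
  ∀ p', ¬ Tr p τ p'

/-- Optional step `p →(α) p'`: a real `α`-step, or `α = τ` and `p = p'`. -/
def OptStep (Tr : Proc → Act → Proc → Prop) (τ : Act) (p : Proc) (α : Act) (p' : Proc) : Prop :=
  Tr p α p' ∨ (α = τ ∧ p = p')

/-- Lift of `→a` to sets. -/
def SetStep (Tr : Proc → Act → Proc → Prop) (Q : Set Proc) (a : Act) (Q' : Set Proc) : Prop :=
  Q' = {q' | ∃ q ∈ Q, Tr q a q'}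

/-- Lift of `↠` to sets. -/
def SetStar (Tr : Proc → Act → Proc → Prop) (τ : Act) (Q Q' : Set Proc) : Prop :=
  Q' = {q' | ∃ q ∈ Q, Star Tr τ q q'}

/-- Lift of `→(α)` to sets. -/
def SetOpt (Tr : Proc → Act → Proc → Prop) (τ : Act) (Q : Set Proc) (α : Act)
    (Q' : Set Proc) : Prop :=
  Q' = {q' | ∃ q ∈ Q, OptStep Tr τ q α q'}

end LTS

/-! ### The logic HML_srbb -/

mutual
/-- Formulas `φ` of HML_srbb: `⟨ε⟩χ` or immediate conjunctions `⋀Ψ`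
(conjunctions are indexed by an arbitrary type). `⊤` is the empty conjunction. -/
inductive Formula (Act : Type) (τ : Act) : Type 1
  | delayed : DFormula Act τ → Formula Act τ
  | conj : (I : Type) → (I → Conjunct Act τ) → Formula Act τ

/-- Delayed formulas `χ`: observations `⟨a⟩φ` (with `a ≠ τ`), standard
conjunctions `⋀Ψ`, stable conjunctions `⋀({¬⟨τ⟩⊤} ∪ Ψ)`, and branching
conjunctions `⋀({(α)φ} ∪ Ψ)`. -/
inductive DFormula (Act : Type) (τ : Act) : Type 1
  | obs : (a : Act) → a ≠ τ → Formula Act τ → DFormula Act τ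
  | conj : (I : Type) → (I → Conjunct Act τ) → DFormula Act τ
  | stableConj : (I : Type) → (I → Conjunct Act τ) → DFormula Act τ
  | branchConj : (α : Act) → Formula Act τ → (I : Type) → (I → Conjunct Act τ) → DFormula Act τ

/-- Conjuncts `ψ`: positive `⟨ε⟩χ` or negative `¬⟨ε⟩χ`. -/
inductive Conjunct (Act : Type) (τ : Act) : Type 1
  | pos : DFormula Act τ → Conjunct Act τ
  | neg : DFormula Act τ → Conjunct Act τ
end

section Semantics

variable {Proc Act : Type}

mutual
/-- Semantics `⟦φ⟧`. -/
def Sat (Tr : Proc → Act → Proc → Prop) (τ : Act) (p : Proc) : Formula Act τ → Prop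
  | .delayed χ => ∃ p', Star Tr τ p p' ∧ SatD Tr τ p' χ
  | .conj _ ps => ∀ i, SatC Tr τ p (ps i)

/-- Semantics `⟦χ⟧^ε` of delayed formulas. -/
def SatD (Tr : Proc → Act → Proc → Prop) (τ : Act) (p : Proc) : DFormula Act τ → Prop
  | .obs a _ φ => ∃ p', Tr p a p' ∧ Sat Tr τ p' φ
  | .conj _ ps => ∀ i, SatC Tr τ p (ps i)
  | .stableConj _ ps => Stable Tr τ p ∧ ∀ i, SatC Tr τ p (ps i)
  | .branchConj α φ _ ps =>
      (∃ p', OptStep Tr τ p α p' ∧ Sat Tr τ p' φ) ∧ ∀ i, SatC Tr τ p (ps i)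

/-- Semantics `⟦ψ⟧^∧` of conjuncts. -/
def SatC (Tr : Proc → Act → Proc → Prop) (τ : Act) (p : Proc) : Conjunct Act τ → Prop
  | .pos χ => ∃ p', Star Tr τ p p' ∧ SatD Tr τ p' χ
  | .neg χ => ¬ ∃ p', Star Tr τ p p' ∧ SatD Tr τ p' χ
end

/-- `φ` distinguishes `p` from the set `Q`. -/
def Distinguishes (Tr : Proc → Act → Proc → Prop) (τ : Act) (φ : Formula Act τ)
    (p : Proc) (Q : Set Proc) : Prop :=
  Sat Tr τ p φ ∧ ∀ q ∈ Q, ¬ Sat Tr τ q φ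

/-- The delayed formula `χ` distinguishes `p` from the set `Q` w.r.t. `⟦·⟧^ε`. -/
def DistinguishesD (Tr : Proc → Act → Proc → Prop) (τ : Act) (χ : DFormula Act τ)
    (p : Proc) (Q : Set Proc) : Prop :=
  SatD Tr τ p χ ∧ ∀ q ∈ Q, ¬ SatD Tr τ q χ

/-- The conjunct `ψ` distinguishes `p` from `q` w.r.t. `⟦·⟧^∧`. -/
def DistinguishesC (Tr : Proc → Act → Proc → Prop) (τ : Act) (ψ : Conjunct Act τ)
    (p q : Proc) : Prop :=
  SatC Tr τ p ψ ∧ ¬ SatC Tr τ q ψ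

/-- Stability-respecting branching bisimulations: symmetric relations with the
branching-bisimulation transfer property and the stability-respecting
property. -/
def IsSRBBisim (Tr : Proc → Act → Proc → Prop) (τ : Act) (R : Proc → Proc → Prop) : Prop :=
  Symmetric R ∧
  (∀ p q, R p q → ∀ α p', Tr p α p' →
    (α = τ ∧ R p' q) ∨
      ∃ q' q'', Star Tr τ q q' ∧ Tr q' α q'' ∧ R p q' ∧ R p' q'') ∧
  (∀ p q, R p q → Stable Tr τ p →
    ∃ q', Star Tr τ q q' ∧ Stable Tr τ q' ∧ R p q')

end Semantics

/-! ### Expressiveness prices -/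

section Expr

variable {Act : Type} {τ : Act}

mutual
/-- Expressiveness price `expr` of formulas. -/
def exprF : Formula Act τ → Energy
  | .delayed χ => exprE χ
  | .conj I ps => ⨆ _ : Nonempty I, ((unitE 4 + unitE 2) + ⨆ i, exprC (ps i))

/-- Expressiveness price `expr^ε` of delayed formulas. -/
def exprE : DFormula Act τ → Energy
  | .obs _ _ φ => unitE 0 + exprF φ
  | .conj I ps => ⨆ _ : Nonempty I, (unitE 2 + ⨆ i, exprC (ps i))
  | .stableConj _ ps => unitE 3 + ⨆ i, exprC (ps i)
  | .branchConj _ φ _ ps =>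
      (unitE 1 + unitE 2) +
        (((unitE 0 + exprF φ) ⊔ onlyAt 5 (1 + exprF φ 0)) ⊔ ⨆ i, exprC (ps i))

/-- Expressiveness price `expr^∧` of conjuncts. -/
def exprC : Conjunct Act τ → Energy
  | .pos χ => exprE χ ⊔ onlyAt 5 (exprE χ 0)
  | .neg χ => (unitE 7 + exprE χ) ⊔ onlyAt 6 (exprE χ 0)
end

end Expr

/-! ### The weak spectroscopy energy game -/

/-- Positions of the weak spectroscopy game. -/
inductive GPos (Proc Act : Type) : Type
  | att (p : Proc) (Q : Set Proc)                                 -- `[p,Q]_a`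
  | attD (p : Proc) (Q : Set Proc)                                -- `[p,Q]^ε_a`
  | attC (p q : Proc)                                             -- `[p,q]^∧_a`
  | attB (p : Proc) (Q : Set Proc)                                -- `[p,Q]^η_a`
  | defC (p : Proc) (Q : Set Proc)                                -- `(p,Q)_d`
  | defS (p : Proc) (Q : Set Proc)                                -- `(p,Q)^s_d`
  | defB (p : Proc) (α : Act) (p' : Proc) (Q Qa : Set Proc)       -- `(p,α,p',Q,Qa)^η_d`

/-- The zero update. -/
def zeroU : Update := fun _ => UpdComp.zero

/-- The update `-ê_i`. -/
def decU (i : Fin 8) : Update := fun k => if k = i then UpdComp.decr else UpdComp.zero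

/-- The update `(min_{1,6},0,0,0,0,0,0,0)`. -/
def minU16 : Update := fun k => if k = 0 then UpdComp.minWith {5} else UpdComp.zero

/-- The update `(min_{1,7},0,0,0,0,0,0,-1)`. -/
def minU17dec8 : Update := fun k =>
  if k = 0 then UpdComp.minWith {6} else if k = 7 then UpdComp.decr else UpdComp.zero

/-- The update `(0,-1,-1,0,0,0,0,0)`. -/
def dec23 : Update := fun k => if k = 1 ∨ k = 2 then UpdComp.decr else UpdComp.zero

/-- The update `(min_{1,6},-1,-1,0,0,0,0,0)`. -/
def minU16dec23 : Update := fun k =>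
  if k = 0 then UpdComp.minWith {5}
  else if k = 1 ∨ k = 2 then UpdComp.decr else UpdComp.zero

section Game

variable {Proc Act : Type}

/-- Moves of the weak spectroscopy game. -/
inductive GMove (Tr : Proc → Act → Proc → Prop) (τ : Act) :
    GPos Proc Act → Update → GPos Proc Act → Prop
  | delay {p : Proc} {Q Q' : Set Proc} :
      SetStar Tr τ Q Q' →
      GMove Tr τ (.att p Q) zeroU (.attD p Q')
  | procrastination {p p' : Proc} {Q : Set Proc} :
      Tr p τ p' → p ≠ p' →
      GMove Tr τ (.attD p Q) zeroU (.attD p' Q)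
  | observation {p p' : Proc} {a : Act} {Q Q' : Set Proc} :
      Tr p a p' → a ≠ τ → SetStep Tr Q a Q' →
      GMove Tr τ (.attD p Q) (decU 0) (.att p' Q')
  | finishing {p : Proc} :
      GMove Tr τ (.att p ∅) zeroU (.defC p ∅)
  | immediateConj {p : Proc} {Q : Set Proc} :
      Q ≠ ∅ →
      GMove Tr τ (.att p Q) (decU 4) (.defC p Q)
  | lateConj {p : Proc} {Q : Set Proc} :
      GMove Tr τ (.attD p Q) zeroU (.defC p Q)
  | conjAnswer {p q : Proc} {Q : Set Proc} :
      q ∈ Q →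
      GMove Tr τ (.defC p Q) (decU 2) (.attC p q)
  | posConjunct {p q : Proc} {Q : Set Proc} :
      SetStar Tr τ {q} Q →
      GMove Tr τ (.attC p q) minU16 (.attD p Q)
  | negConjunct {p q : Proc} {Q : Set Proc} :
      SetStar Tr τ {p} Q → p ≠ q →
      GMove Tr τ (.attC p q) minU17dec8 (.attD q Q)
  | stableConj {p : Proc} {Q : Set Proc} :
      Stable Tr τ p →
      GMove Tr τ (.attD p Q) zeroU (.defS p {q ∈ Q | Stable Tr τ q})
  | conjStableAnswer {p q : Proc} {Q : Set Proc} :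
      q ∈ Q →
      GMove Tr τ (.defS p Q) (decU 3) (.attC p q)
  | stableFinishing {p : Proc} :
      GMove Tr τ (.defS p ∅) (decU 3) (.defC p ∅)
  | branchConj {p p' : Proc} {α : Act} {Q Qa : Set Proc} :
      OptStep Tr τ p α p' → Qa ⊆ Q →
      GMove Tr τ (.attD p Q) zeroU (.defB p α p' (Q \ Qa) Qa)
  | branchAnswer {p p' q : Proc} {α : Act} {Q Qa : Set Proc} :
      q ∈ Q →
      GMove Tr τ (.defB p α p' Q Qa) dec23 (.attC p q)
  | branchObservation {p p' : Proc} {α : Act} {Q Qa Q' : Set Proc} :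
      SetOpt Tr τ Qa α Q' →
      GMove Tr τ (.defB p α p' Q Qa) minU16dec23 (.attB p' Q')
  | branchAccounting {p : Proc} {Q : Set Proc} :
      GMove Tr τ (.attB p Q) (decU 0) (.att p Q)

/-- Defender positions of the weak spectroscopy game. -/
def isDefender : GPos Proc Act → Prop
  | .defC _ _ => True
  | .defS _ _ => True
  | .defB _ _ _ _ _ => True
  | _ => False

/-- The weak spectroscopy energy game `G△`. -/
def specGame (Tr : Proc → Act → Proc → Prop) (τ : Act) : EGame (GPos Proc Act) where
  defender := isDefender
  move := GMove Tr τ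

end Game

/-! ### Strategy formulas -/

section Strat

variable {Proc Act : Type}

mutual
/-- Attacker strategy formulas (formula sort). -/
inductive StratF (Tr : Proc → Act → Proc → Prop) (τ : Act) :
    GPos Proc Act → Energy → Formula Act τ → Prop
  | delay {p : Proc} {Q Q' : Set Proc} {u : Update} {e e' : Energy} {χ : DFormula Act τ} :
      GMove Tr τ (.att p Q) u (.attD p Q') →
      upd e u = some e' →
      (specGame Tr τ).Win (.attD p Q') e' →
      StratD Tr τ (.attD p Q') e' χ →
      StratF Tr τ (.att p Q) e (.delayed χ)
  | immediateConj {p : Proc} {Q : Set Proc} {u : Update} {e e' : Energy}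
      {I : Type} {ps : I → Conjunct Act τ} :
      GMove Tr τ (.att p Q) u (.defC p Q) →
      upd e u = some e' →
      (specGame Tr τ).Win (.defC p Q) e' →
      StratD Tr τ (.defC p Q) e' (.conj I ps) →
      StratF Tr τ (.att p Q) e (.conj I ps)

/-- Attacker strategy formulas (delayed-formula sort). -/
inductive StratD (Tr : Proc → Act → Proc → Prop) (τ : Act) :
    GPos Proc Act → Energy → DFormula Act τ → Prop
  | procrastination {p p' : Proc} {Q : Set Proc} {u : Update} {e e' : Energy}
      {χ : DFormula Act τ} :
      GMove Tr τ (.attD p Q) u (.attD p' Q) →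
      upd e u = some e' →
      (specGame Tr τ).Win (.attD p' Q) e' →
      StratD Tr τ (.attD p' Q) e' χ →
      StratD Tr τ (.attD p Q) e χ
  | observation {p p' : Proc} {a : Act} {Q Q' : Set Proc} {u : Update} {e e' : Energy}
      {φ : Formula Act τ} (ha : a ≠ τ) :
      GMove Tr τ (.attD p Q) u (.att p' Q') →
      Tr p a p' → SetStep Tr Q a Q' →
      upd e u = some e' →
      (specGame Tr τ).Win (.att p' Q') e' →
      StratF Tr τ (.att p' Q') e' φ →
      StratD Tr τ (.attD p Q) e (.obs a ha φ)
  | lateConj {p : Proc} {Q : Set Proc} {u : Update} {e e' : Energy} {χ : DFormula Act τ} :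
      GMove Tr τ (.attD p Q) u (.defC p Q) →
      upd e u = some e' →
      (specGame Tr τ).Win (.defC p Q) e' →
      StratD Tr τ (.defC p Q) e' χ →
      StratD Tr τ (.attD p Q) e χ
  | stable {p : Proc} {Q Q' : Set Proc} {u : Update} {e e' : Energy} {χ : DFormula Act τ} :
      GMove Tr τ (.attD p Q) u (.defS p Q') →
      upd e u = some e' →
      (specGame Tr τ).Win (.defS p Q') e' →
      StratD Tr τ (.defS p Q') e' χ →
      StratD Tr τ (.attD p Q) e χ
  | branch {p p' : Proc} {α : Act} {Q Q' Qa : Set Proc} {u : Update} {e e' : Energy}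
      {χ : DFormula Act τ} :
      GMove Tr τ (.attD p Q) u (.defB p α p' Q' Qa) →
      upd e u = some e' →
      (specGame Tr τ).Win (.defB p α p' Q' Qa) e' →
      StratD Tr τ (.defB p α p' Q' Qa) e' χ →
      StratD Tr τ (.attD p Q) e χ
  | conj {p : Proc} {Q : Set Proc} {e : Energy}
      (us : {q // q ∈ Q} → Update) (es : {q // q ∈ Q} → Energy)
      (ψs : {q // q ∈ Q} → Conjunct Act τ) :
      (∀ qq : {q // q ∈ Q}, GMove Tr τ (.defC p Q) (us qq) (.attC p qq.1)) →
      (∀ qq : {q // q ∈ Q}, upd e (us qq) = some (es qq)) →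
      (∀ qq : {q // q ∈ Q}, (specGame Tr τ).Win (.attC p qq.1) (es qq)) →
      (∀ qq : {q // q ∈ Q}, StratC Tr τ (.attC p qq.1) (es qq) (ψs qq)) →
      StratD Tr τ (.defC p Q) e (.conj {q // q ∈ Q} ψs)
  | stableConj {p : Proc} {Q : Set Proc} {e : Energy}
      (hne : Q.Nonempty)
      (us : {q // q ∈ Q} → Update) (es : {q // q ∈ Q} → Energy)
      (ψs : {q // q ∈ Q} → Conjunct Act τ) :
      (∀ qq : {q // q ∈ Q}, GMove Tr τ (.defS p Q) (us qq) (.attC p qq.1)) →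
      (∀ qq : {q // q ∈ Q}, upd e (us qq) = some (es qq)) →
      (∀ qq : {q // q ∈ Q}, (specGame Tr τ).Win (.attC p qq.1) (es qq)) →
      (∀ qq : {q // q ∈ Q}, StratC Tr τ (.attC p qq.1) (es qq) (ψs qq)) →
      StratD Tr τ (.defS p Q) e (.stableConj {q // q ∈ Q} ψs)
  | stableFinish {p : Proc} {u : Update} {e e' : Energy} :
      GMove Tr τ (.defS p ∅) u (.defC p ∅) →
      upd e u = some e' →
      (specGame Tr τ).Win (.defC p (∅ : Set Proc)) e' →
      StratD Tr τ (.defS p ∅) e (.stableConj Empty fun x => x.elim)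
  | branchConj {p p' : Proc} {α : Act} {Q Qa Q' : Set Proc} {ua ua' : Update}
      {e e1 ea : Energy} {φa : Formula Act τ}
      (us : {q // q ∈ Q} → Update) (es : {q // q ∈ Q} → Energy)
      (ψs : {q // q ∈ Q} → Conjunct Act τ) :
      GMove Tr τ (.defB p α p' Q Qa) ua (.attB p' Q') →
      GMove Tr τ (.attB p' Q') ua' (.att p' Q') →
      upd e ua = some e1 →
      upd e1 ua' = some ea →
      (specGame Tr τ).Win (.att p' Q') ea →
      StratF Tr τ (.att p' Q') ea φa →
      (∀ qq : {q // q ∈ Q}, GMove Tr τ (.defB p α p' Q Qa) (us qq) (.attC p qq.1)) →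
      (∀ qq : {q // q ∈ Q}, upd e (us qq) = some (es qq)) →
      (∀ qq : {q // q ∈ Q}, (specGame Tr τ).Win (.attC p qq.1) (es qq)) →
      (∀ qq : {q // q ∈ Q}, StratC Tr τ (.attC p qq.1) (es qq) (ψs qq)) →
      StratD Tr τ (.defB p α p' Q Qa) e (.branchConj α φa {q // q ∈ Q} ψs)

/-- Attacker strategy formulas (conjunct sort). -/
inductive StratC (Tr : Proc → Act → Proc → Prop) (τ : Act) :
    GPos Proc Act → Energy → Conjunct Act τ → Prop
  | pos {p q : Proc} {Q' : Set Proc} {u : Update} {e e' : Energy} {χ : DFormula Act τ} :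
      GMove Tr τ (.attC p q) u (.attD p Q') →
      upd e u = some e' →
      (specGame Tr τ).Win (.attD p Q') e' →
      StratD Tr τ (.attD p Q') e' χ →
      StratC Tr τ (.attC p q) e (.pos χ)
  | neg {p q : Proc} {P' : Set Proc} {u : Update} {e e' : Energy} {χ : DFormula Act τ} :
      GMove Tr τ (.attC p q) u (.attD q P') →
      upd e u = some e' →
      (specGame Tr τ).Win (.attD q P') e' →
      StratD Tr τ (.attD q P') e' χ →
      StratC Tr τ (.attC p q) e (.neg χ)
end

end Strat

/-!
Induction on the distinguishing formula, read as an attacker strategy. Every operator of HML_srbb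
corresponds to a move of `G△`, and the increment its price rule adds is exactly what that move's
energy update consumes. The distinction tells the attacker how to play: the successor witnessing
an observation, at each defender answer a conjunct failing there, and for a branching conjunction
the set `Qa` of processes satisfying all other conjuncts. Winning budgets are upward closed, so a
price that dominates the required budget componentwise suffices.
-/

section EnergyUpdates

lemma exists_mem_upd_ge {e f : Energy} {u : Update}
    (hdecr : ∀ k, u k = .decr → f k + 1 ≤ e k)
    (hzero : ∀ k, u k = .zero → f k ≤ e k)
    (hmin : ∀ k D, u k = .minWith D → ∀ d ∈ insert k D, f k ≤ e d) :
    ∃ e' ∈ upd e u, f ≤ e' := by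
  have hpos : ∀ k, u k = .decr → e k ≠ 0 := fun k hk he => by
    simpa [he] using hdecr k hk
  refine ⟨_, by rw [upd, if_pos hpos]; rfl, fun k => ?_⟩
  dsimp only
  split
  next hk => exact ENat.le_sub_of_add_le_right ENat.one_ne_top (hdecr k hk)
  next hk => exact hzero k hk
  next D hk => exact Finset.le_inf (hmin k D hk)

lemma upd_mono {e₁ e₂ f₁ : Energy} {u : Update} (he : e₁ ≤ e₂) (hf₁ : f₁ ∈ upd e₁ u) :
    ∃ f₂ ∈ upd e₂ u, f₁ ≤ f₂ := by
  unfold upd at hf₁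
  split_ifs at hf₁ with hpos
  · cases hf₁
    refine exists_mem_upd_ge (fun k hk => ?_) (fun k hk => ?_) (fun k D hk d hd => ?_) <;>
      rw [hk]
    · exact (tsub_add_cancel_of_le (Order.one_le_iff_ne_zero.2 (hpos k hk))).trans_le (he k)
    · exact he k
    · exact (Finset.inf_le hd).trans (he d)
  · cases hf₁

lemma exists_mem_upd_zeroU {e f : Energy} (h : f ≤ e) : ∃ e' ∈ upd e zeroU, f ≤ e' :=
  exists_mem_upd_ge (by simp [zeroU]) (fun k _ => h k) (by simp [zeroU])

lemma exists_mem_upd_decU {e f : Energy} {i : Fin 8} (h : unitE i + f ≤ e) :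
    ∃ e' ∈ upd e (decU i), f ≤ e' := by
  refine exists_mem_upd_ge (fun k hk => ?_) (fun k hk => ?_) (fun k D hk => ?_)
  · obtain rfl : k = i := by by_contra hne; simp [decU, hne] at hk
    simpa [unitE, add_comm] using h k
  · have hne : k ≠ i := by rintro rfl; simp [decU] at hk
    simpa [unitE, hne] using h k
  · by_cases hki : k = i <;> simp [decU, hki] at hk

lemma exists_mem_upd_minU16 {e f : Energy} (h : f ≤ e) (h5 : f 0 ≤ e 5) :
    ∃ e' ∈ upd e minU16, f ≤ e' := by
  refine exists_mem_upd_ge (fun k hk => ?_) (fun k hk => ?_) (fun k D hk => ?_) <;>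
    have hk' := h k <;> fin_cases k <;> simp [minU16] at hk hk' ⊢ <;> subst_vars <;> simp_all

lemma exists_mem_upd_minU17dec8 {e f : Energy} (h : unitE 7 + f ≤ e) (h6 : f 0 ≤ e 6) :
    ∃ e' ∈ upd e minU17dec8, f ≤ e' := by
  refine exists_mem_upd_ge (fun k hk => ?_) (fun k hk => ?_) (fun k D hk => ?_) <;>
    have hk' := h k <;> fin_cases k <;> simp [minU17dec8, unitE] at hk hk' ⊢ <;> subst_vars <;>
    simp_all [add_comm]

lemma exists_mem_upd_dec23 {e f : Energy} (h : unitE 1 + unitE 2 + f ≤ e) :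
    ∃ e' ∈ upd e dec23, f ≤ e' := by
  refine exists_mem_upd_ge (fun k hk => ?_) (fun k hk => ?_) (fun k D hk => ?_) <;>
    have hk' := h k <;> fin_cases k <;> simp [dec23, unitE] at hk hk' ⊢ <;> simp_all [add_comm]

lemma exists_mem_upd_minU16dec23 {e f : Energy} (h : unitE 1 + unitE 2 + f ≤ e)
    (h5 : f 0 ≤ e 5) : ∃ e' ∈ upd e minU16dec23, f ≤ e' := by
  refine exists_mem_upd_ge (fun k hk => ?_) (fun k hk => ?_) (fun k D hk => ?_) <;>
    have hk' := h k <;> fin_cases k <;> simp [minU16dec23, unitE] at hk hk' ⊢ <;> subst_vars <;>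
    simp_all [add_comm]

end EnergyUpdates

namespace EGame

variable {Pos : Type} {G : EGame Pos}

lemma Win.mono {g : Pos} {e₁ e₂ : Energy} (h : G.Win g e₁) (he : e₁ ≤ e₂) : G.Win g e₂ := by
  induction h generalizing e₂ with
  | attack hg hmove hupd _ ih =>
    obtain ⟨f₂, hf₂, hle⟩ := upd_mono he hupd
    exact .attack hg hmove hf₂ (ih hle)
  | defend hg hdef _ ih =>
    refine .defend hg (fun u g' hmove => ?_) (fun u g' f₂ hmove hf₂ => ?_) <;>
      obtain ⟨f₁, hf₁⟩ := Option.ne_none_iff_exists'.mp (hdef u g' hmove) <;>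
      obtain ⟨f₂', hf₂', hle⟩ := upd_mono he hf₁
    · exact Option.ne_none_iff_exists'.mpr ⟨f₂', hf₂'⟩
    · cases Option.mem_unique hf₂' hf₂
      exact ih u g' f₁ hmove hf₁ hle

lemma Win.of_attack {g g' : Pos} {u : Update} {e f : Energy} (hg : ¬ G.defender g)
    (hmove : G.move g u g') (hupd : ∃ e' ∈ upd e u, f ≤ e') (h : G.Win g' f) : G.Win g e :=
  let ⟨_, he', hle⟩ := hupd
  .attack hg hmove he' (h.mono hle)

lemma Win.of_defend {g : Pos} {e : Energy} (hg : G.defender g)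
    (h : ∀ u g', G.move g u g' → ∃ e' ∈ upd e u, G.Win g' e') : G.Win g e := by
  refine .defend hg (fun u g' hmove => ?_) (fun u g' e' hmove he' => ?_) <;>
    obtain ⟨e'', he'', hwin⟩ := h u g' hmove
  · exact Option.ne_none_iff_exists'.mpr ⟨e'', he''⟩
  · cases Option.mem_unique he'' he'
    exact hwin

end EGame

section SpecGame

variable {Proc Act : Type} {Tr : Proc → Act → Proc → Prop} {τ : Act}

lemma win_defC_empty (p : Proc) (e : Energy) : (specGame Tr τ).Win (.defC p ∅) e :=
  .of_defend trivial fun _ _ hmove => by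
    cases hmove with
    | conjAnswer hq => exact absurd hq (Set.notMem_empty _)

lemma win_attD_of_star {p p' : Proc} {Q : Set Proc} {e : Energy} (hp : Star Tr τ p p')
    (h : (specGame Tr τ).Win (.attD p' Q) e) : (specGame Tr τ).Win (.attD p Q) e := by
  induction hp using Relation.ReflTransGen.head_induction_on with
  | refl => exact h
  | @head p₀ p₁ hstep _ ih =>
    by_cases hp : p₀ = p₁
    · exact hp ▸ ih
    · exact .of_attack id (GMove.procrastination hstep hp) (exists_mem_upd_zeroU le_rfl) ih

lemma win_defC_of_forall {p : Proc} {Q : Set Proc} {S : Energy}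
    (h : ∀ q ∈ Q, (specGame Tr τ).Win (.attC p q) S) :
    (specGame Tr τ).Win (.defC p Q) (unitE 2 + S) :=
  .of_defend trivial fun _ _ hmove => by
    cases hmove with
    | conjAnswer hq =>
      obtain ⟨e', he', hle⟩ := exists_mem_upd_decU le_rfl
      exact ⟨e', he', (h _ hq).mono hle⟩

lemma win_defS_of_forall {p : Proc} {Q : Set Proc} {S : Energy}
    (h : ∀ q ∈ Q, (specGame Tr τ).Win (.attC p q) S) :
    (specGame Tr τ).Win (.defS p Q) (unitE 3 + S) :=
  .of_defend trivial fun _ _ hmove => by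
    obtain ⟨e', he', hle⟩ := exists_mem_upd_decU (le_refl (unitE 3 + S))
    cases hmove with
    | conjStableAnswer hq => exact ⟨e', he', (h _ hq).mono hle⟩
    | stableFinishing => exact ⟨e', he', win_defC_empty p e'⟩

lemma win_defB_of_forall {p p' : Proc} {α : Act} {Q Qa : Set Proc} {X f : Energy}
    (hQ : ∀ q ∈ Q, (specGame Tr τ).Win (.attC p q) X)
    (hQa : (specGame Tr τ).Win (.att p' {q' | ∃ q ∈ Qa, OptStep Tr τ q α q'}) f)
    (hf : unitE 0 + f ≤ X) (hf5 : 1 + f 0 ≤ X 5) :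
    (specGame Tr τ).Win (.defB p α p' Q Qa) (unitE 1 + unitE 2 + X) :=
  .of_defend trivial fun _ _ hmove => by
    cases hmove with
    | branchAnswer hq =>
      obtain ⟨e', he', hle⟩ := exists_mem_upd_dec23 le_rfl
      exact ⟨e', he', (hQ _ hq).mono hle⟩
    | branchObservation hQ' =>
      subst hQ'
      obtain ⟨e', he', hle⟩ := exists_mem_upd_minU16dec23 (e := unitE 1 + unitE 2 + X)
        (f := unitE 0 + f) (by gcongr) (by simpa [unitE] using hf5)
      exact ⟨e', he', .of_attack id GMove.branchAccounting (exists_mem_upd_decU hle) hQa⟩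

lemma win_attC_iSup {I : Type} {ps : I → Conjunct Act τ} {p q : Proc}
    (hwin : ∀ i, DistinguishesC Tr τ (ps i) p q →
      (specGame Tr τ).Win (.attC p q) (exprC (ps i)))
    (hp : ∀ i, SatC Tr τ p (ps i)) (hq : ¬ ∀ i, SatC Tr τ q (ps i)) :
    (specGame Tr τ).Win (.attC p q) (⨆ i, exprC (ps i)) :=
  let ⟨i, hi⟩ := not_forall.1 hq
  (hwin i ⟨hp i, hi⟩).mono (le_iSup (fun i => exprC (ps i)) i)

mutual

theorem win_exprF_of_distinguishes {φ : Formula Act τ} {p : Proc} {Q : Set Proc}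
    (h : Distinguishes Tr τ φ p Q) : (specGame Tr τ).Win (.att p Q) (exprF φ) := by
  obtain ⟨hp, hQ⟩ := h
  cases φ with
  | delayed χ =>
    simp only [Sat] at hp hQ
    obtain ⟨p', hpp', hχ⟩ := hp
    have hχQ : DistinguishesD Tr τ χ p' {q' | ∃ q ∈ Q, Star Tr τ q q'} :=
      ⟨hχ, fun q' ⟨q, hq, hqq'⟩ hq' => hQ q hq ⟨q', hqq', hq'⟩⟩
    exact .of_attack id (GMove.delay rfl) (exists_mem_upd_zeroU le_rfl)
      (win_attD_of_star hpp' (win_exprE_of_distinguishesD hχQ))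
  | conj I ps =>
    simp only [Sat] at hp hQ
    rcases Q.eq_empty_or_nonempty with rfl | hQne
    · exact .of_attack id GMove.finishing (exists_mem_upd_zeroU le_rfl) (win_defC_empty p _)
    have : Nonempty I := (not_forall.1 (hQ _ hQne.some_mem)).nonempty
    simp only [exprF, iSup_pos this]
    exact .of_attack id (GMove.immediateConj hQne.ne_empty)
      (exists_mem_upd_decU (add_assoc _ _ _).ge)
      (win_defC_of_forall fun q hq =>
        win_attC_iSup (fun _ => win_exprC_of_distinguishesC) hp (hQ q hq))

theorem win_exprE_of_distinguishesD {χ : DFormula Act τ} {p : Proc} {Q : Set Proc}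
    (h : DistinguishesD Tr τ χ p Q) : (specGame Tr τ).Win (.attD p Q) (exprE χ) := by
  obtain ⟨hp, hQ⟩ := h
  cases χ with
  | obs a ha φ =>
    simp only [SatD] at hp hQ
    obtain ⟨p', hpp', hφ⟩ := hp
    have hφQ : Distinguishes Tr τ φ p' {q' | ∃ q ∈ Q, Tr q a q'} :=
      ⟨hφ, fun q' ⟨q, hq, hqq'⟩ hq' => hQ q hq ⟨q', hqq', hq'⟩⟩
    exact .of_attack id (GMove.observation hpp' ha rfl) (exists_mem_upd_decU le_rfl)
      (win_exprF_of_distinguishes hφQ)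
  | conj I ps =>
    simp only [SatD] at hp hQ
    rcases Q.eq_empty_or_nonempty with rfl | hQne
    · exact .of_attack id GMove.lateConj (exists_mem_upd_zeroU le_rfl) (win_defC_empty p _)
    have : Nonempty I := (not_forall.1 (hQ _ hQne.some_mem)).nonempty
    simp only [exprE, iSup_pos this]
    exact .of_attack id GMove.lateConj (exists_mem_upd_zeroU le_rfl)
      (win_defC_of_forall fun q hq =>
        win_attC_iSup (fun _ => win_exprC_of_distinguishesC) hp (hQ q hq))
  | stableConj I ps =>
    simp only [SatD] at hp hQ
    obtain ⟨hstable, hp⟩ := hp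
    simp only [exprE]
    exact .of_attack id (GMove.stableConj hstable) (exists_mem_upd_zeroU le_rfl)
      (win_defS_of_forall fun q ⟨hq, hqs⟩ =>
        win_attC_iSup (fun _ => win_exprC_of_distinguishesC) hp fun h => hQ q hq ⟨hqs, h⟩)
  | branchConj α φ I ps =>
    simp only [SatD] at hp hQ
    obtain ⟨⟨p', hpp', hφ⟩, hp⟩ := hp
    set Qa := {q ∈ Q | ∀ i, SatC Tr τ q (ps i)}
    have hφQa : Distinguishes Tr τ φ p' {q' | ∃ q ∈ Qa, OptStep Tr τ q α q'} :=
      ⟨hφ, fun q' ⟨q, ⟨hq, hqa⟩, hqq'⟩ hq' => hQ q hq ⟨⟨q', hqq', hq'⟩, hqa⟩⟩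
    simp only [exprE]
    exact .of_attack id (GMove.branchConj hpp' (Set.sep_subset Q _)) (exists_mem_upd_zeroU le_rfl)
      (win_defB_of_forall
        (fun q ⟨hq, hqa⟩ => (win_attC_iSup (fun _ => win_exprC_of_distinguishesC) hp
          fun h => hqa ⟨hq, h⟩).mono le_sup_right)
        (win_exprF_of_distinguishes hφQa) (le_sup_left.trans le_sup_left) (by simp [onlyAt]))

theorem win_exprC_of_distinguishesC {ψ : Conjunct Act τ} {p q : Proc}
    (h : DistinguishesC Tr τ ψ p q) : (specGame Tr τ).Win (.attC p q) (exprC ψ) := by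
  obtain ⟨hp, hq⟩ := h
  cases ψ with
  | pos χ =>
    simp only [SatC] at hp hq
    obtain ⟨p', hpp', hχ⟩ := hp
    have hχq : DistinguishesD Tr τ χ p' {q' | ∃ x ∈ ({q} : Set Proc), Star Tr τ x q'} := by
      refine ⟨hχ, ?_⟩
      rintro q' ⟨_, rfl, hqq'⟩ hq'
      exact hq ⟨q', hqq', hq'⟩
    simp only [exprC]
    exact .of_attack id (GMove.posConjunct rfl)
      (exists_mem_upd_minU16 le_sup_left (by simp [onlyAt]))
      (win_attD_of_star hpp' (win_exprE_of_distinguishesD hχq))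
  | neg χ =>
    simp only [SatC, not_not] at hp hq
    obtain ⟨q', hqq', hχ⟩ := hq
    have hpq : p ≠ q := by
      rintro rfl
      exact hp ⟨q', hqq', hχ⟩
    have hχp : DistinguishesD Tr τ χ q' {p' | ∃ x ∈ ({p} : Set Proc), Star Tr τ x p'} := by
      refine ⟨hχ, ?_⟩
      rintro p' ⟨_, rfl, hpp'⟩ hp'
      exact hp ⟨p', hpp', hp'⟩
    simp only [exprC]
    exact .of_attack id (GMove.negConjunct rfl hpq)
      (exists_mem_upd_minU17dec8 le_sup_left (by simp [onlyAt]))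
      (win_attD_of_star hqq' (win_exprE_of_distinguishesD hχp))

end

end SpecGame

/-- if the conjunct `ψ` distinguishes `p` from `q` (w.r.t.
`⟦·⟧^∧`), then `expr^∧(ψ)` is attacker-winning at `[p,q]^∧_a`. -/
theorem distinction_price_in_win_conjunct {Proc Act : Type} (Tr : Proc → Act → Proc → Prop)
    (τ : Act) (ψ : Conjunct Act τ) (p q : Proc)
    (h : DistinguishesC Tr τ ψ p q) :
    (specGame Tr τ).Win (.attC p q) (exprC ψ) :=
  win_exprC_of_distinguishesC h

end Spectroscopy
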